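/- The projective distance dist(x,y) = ‖x∧y‖/(‖x‖‖y‖) on nonzero vectors of ℝ^n satisfies the triangle inequality: dist(x,z) ≤ dist(x,y) + dist(y,z) for all nonzero x, y, z ∈ ℝ^n. -/

import Mathlib

open scoped RealInnerProductSpace

noncomputable section

/-- The norm `‖x ∧ y‖` in `⋀² ℝⁿ` (Gram identity). -/
def wedgeTwoNorm {n : ℕ} (x y : EuclideanSpace ℝ (Fin n)) : ℝ :=
  Real.sqrt (‖x‖ ^ 2 * ‖y‖ ^ 2 - (⟪x, y⟫ : ℝ) ^ 2)

/-- The projective distance `dist(x,y) = ‖x ∧ y‖ / (‖x‖ ‖y‖)`. -/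
def projDist {n : ℕ} (x y : EuclideanSpace ℝ (Fin n)) : ℝ :=
  wedgeTwoNorm x y / (‖x‖ * ‖y‖)

lemma real_aux (a b c : ℝ) (ha : a ^ 2 ≤ 1) (hb : b ^ 2 ≤ 1) (hc : c ^ 2 ≤ 1)
    (key : (c - a * b) ^ 2 ≤ (1 - a ^ 2) * (1 - b ^ 2)) :
    Real.sqrt (1 - c ^ 2) ≤ Real.sqrt (1 - a ^ 2) + Real.sqrt (1 - b ^ 2) := by
  set s := Real.sqrt (1 - a ^ 2) with hs'
  set t := Real.sqrt (1 - b ^ 2) with ht'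
  have hs0 : 0 ≤ s := Real.sqrt_nonneg _
  have ht0 : 0 ≤ t := Real.sqrt_nonneg _
  have hs : s ^ 2 = 1 - a ^ 2 := Real.sq_sqrt (by linarith)
  have ht : t ^ 2 = 1 - b ^ 2 := Real.sq_sqrt (by linarith)
  have hst : (c - a * b) ^ 2 ≤ (s * t) ^ 2 := by
    rw [mul_pow, hs, ht]; exact key
  have hfin : (1 : ℝ) - c ^ 2 ≤ (s + t) ^ 2 := by
    nlinarith [mul_nonneg hs0 ht0, sq_nonneg (s * t - c * (a * b - c)), sq_nonneg (a * b - c),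
      hst, hs, ht, hc]
  calc Real.sqrt (1 - c ^ 2) ≤ Real.sqrt ((s + t) ^ 2) := Real.sqrt_le_sqrt hfin
    _ = s + t := Real.sqrt_sq (by positivity)

lemma sq_inner_le_one {n : ℕ} (u v : EuclideanSpace ℝ (Fin n)) (hu : ‖u‖ = 1)
    (hv : ‖v‖ = 1) : (⟪u, v⟫ : ℝ) ^ 2 ≤ 1 := by
  have h := abs_real_inner_le_norm u v
  rw [hu, hv] at h
  nlinarith [abs_nonneg (⟪u, v⟫ : ℝ), sq_abs (⟪u, v⟫ : ℝ)]

lemma aux_unit {n : ℕ} (u v w : EuclideanSpace ℝ (Fin n))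
    (hu : ‖u‖ = 1) (hv : ‖v‖ = 1) (hw : ‖w‖ = 1) :
    Real.sqrt (1 - (⟪u, w⟫ : ℝ) ^ 2) ≤
      Real.sqrt (1 - (⟪u, v⟫ : ℝ) ^ 2) + Real.sqrt (1 - (⟪v, w⟫ : ℝ) ^ 2) := by
  have hvv : (⟪v, v⟫ : ℝ) = 1 := by
    rw [real_inner_self_eq_norm_sq, hv]; norm_num
  apply real_aux _ _ _ (sq_inner_le_one u v hu hv) (sq_inner_le_one v w hv hw)
    (sq_inner_le_one u w hu hw)
  have h1 : (⟪u - (⟪u, v⟫ : ℝ) • v, w - (⟪v, w⟫ : ℝ) • v⟫ : ℝ)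
      = ⟪u, w⟫ - (⟪u, v⟫ : ℝ) * ⟪v, w⟫ := by
    simp only [inner_sub_left, inner_sub_right, real_inner_smul_left, real_inner_smul_right,
      hvv]
    rw [real_inner_comm v u]
    ring
  have h2 : ‖u - (⟪u, v⟫ : ℝ) • v‖ ^ 2 = 1 - (⟪u, v⟫ : ℝ) ^ 2 := by
    rw [norm_sub_sq_real, real_inner_smul_right, norm_smul, hu, hv, Real.norm_eq_abs,
      mul_one, sq_abs]
    ring
  have h3 : ‖w - (⟪v, w⟫ : ℝ) • v‖ ^ 2 = 1 - (⟪v, w⟫ : ℝ) ^ 2 := by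
    rw [norm_sub_sq_real, real_inner_smul_right, real_inner_comm w v, norm_smul, hw, hv,
      Real.norm_eq_abs, mul_one, sq_abs]
    ring
  have h4 := abs_real_inner_le_norm (u - (⟪u, v⟫ : ℝ) • v) (w - (⟪v, w⟫ : ℝ) • v)
  rw [h1] at h4
  calc ((⟪u, w⟫ : ℝ) - (⟪u, v⟫ : ℝ) * ⟪v, w⟫) ^ 2
      = |(⟪u, w⟫ : ℝ) - (⟪u, v⟫ : ℝ) * ⟪v, w⟫| ^ 2 := (sq_abs _).symm
    _ ≤ (‖u - (⟪u, v⟫ : ℝ) • v‖ * ‖w - (⟪v, w⟫ : ℝ) • v‖) ^ 2 := by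
        apply pow_le_pow_left₀ (abs_nonneg _) h4
    _ = (1 - (⟪u, v⟫ : ℝ) ^ 2) * (1 - (⟪v, w⟫ : ℝ) ^ 2) := by
        rw [mul_pow, h2, h3]

lemma projDist_eq {n : ℕ} (x y : EuclideanSpace ℝ (Fin n)) (hx : x ≠ 0) (hy : y ≠ 0) :
    projDist x y = Real.sqrt (1 - ((⟪x, y⟫ : ℝ) / (‖x‖ * ‖y‖)) ^ 2) := by
  have hx0 : (0 : ℝ) < ‖x‖ := norm_pos_iff.mpr hx
  have hy0 : (0 : ℝ) < ‖y‖ := norm_pos_iff.mpr hy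
  have hxy : (0 : ℝ) < ‖x‖ * ‖y‖ := mul_pos hx0 hy0
  rw [projDist, wedgeTwoNorm, div_eq_iff hxy.ne', ← Real.sqrt_sq hxy.le,
    ← Real.sqrt_mul' _ (sq_nonneg (‖x‖ * ‖y‖))]
  congr 1
  field_simp
  rw [Real.sq_sqrt (by positivity)]
  ring

/-- The projective distance satisfies the triangle
inequality on nonzero vectors of `ℝⁿ`. -/
theorem stmt7 (n : ℕ) (x y z : EuclideanSpace ℝ (Fin n))
    (hx : x ≠ 0) (hy : y ≠ 0) (hz : z ≠ 0) :
    projDist x z ≤ projDist x y + projDist y z := by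
  have hx0 : (0 : ℝ) < ‖x‖ := norm_pos_iff.mpr hx
  have hy0 : (0 : ℝ) < ‖y‖ := norm_pos_iff.mpr hy
  have hz0 : (0 : ℝ) < ‖z‖ := norm_pos_iff.mpr hz
  set u := ‖x‖⁻¹ • x with hu'
  set v := ‖y‖⁻¹ • y with hv'
  set w := ‖z‖⁻¹ • z with hw'
  have hu : ‖u‖ = 1 := by rw [hu', norm_smul, norm_inv, norm_norm, inv_mul_cancel₀ hx0.ne']
  have hv : ‖v‖ = 1 := by rw [hv', norm_smul, norm_inv, norm_norm, inv_mul_cancel₀ hy0.ne']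
  have hw : ‖w‖ = 1 := by rw [hw', norm_smul, norm_inv, norm_norm, inv_mul_cancel₀ hz0.ne']
  have e1 : (⟪u, v⟫ : ℝ) = ⟪x, y⟫ / (‖x‖ * ‖y‖) := by
    rw [hu', hv', real_inner_smul_left, real_inner_smul_right]
    field_simp
  have e2 : (⟪v, w⟫ : ℝ) = ⟪y, z⟫ / (‖y‖ * ‖z‖) := by
    rw [hv', hw', real_inner_smul_left, real_inner_smul_right]
    field_simp
  have e3 : (⟪u, w⟫ : ℝ) = ⟪x, z⟫ / (‖x‖ * ‖z‖) := by
    rw [hu', hw', real_inner_smul_left, real_inner_smul_right]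
    field_simp
  rw [projDist_eq x z hx hz, projDist_eq x y hx hy, projDist_eq y z hy hz, ← e1, ← e2, ← e3]
  exact aux_unit u v w hu hv hw
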